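/- Let S₁, S₂, T₁, T₂ be Banach spaces with S₁ ⊕ T₁ ≅ S₂ ⊕ T₂ and T₁, T₂ essentially incomparable. If moreover S₂ is SUFDQ (isomorphic to all of its closed hyperplanes, equivalently B(S₂) contains a Fredholm operator of index 1), then S₂ contains a complemented subspace isomorphic to T₁. -/

import Mathlib

open Module

/-- A bounded operator between (semi)normed spaces is *Fredholm of index `k`* if it has closed
range, finite-dimensional kernel and finite-dimensional cokernel, with
`dim ker - dim coker = k`. -/
def IsFredholmOfIndex {V W : Type*} [SeminormedAddCommGroup V] [NormedSpace ℂ V]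
    [SeminormedAddCommGroup W] [NormedSpace ℂ W] (T : V →L[ℂ] W) (k : ℤ) : Prop :=
  IsClosed (LinearMap.range (T : V →ₗ[ℂ] W) : Set W) ∧ FiniteDimensional ℂ (LinearMap.ker (T : V →ₗ[ℂ] W)) ∧
    FiniteDimensional ℂ (W ⧸ LinearMap.range (T : V →ₗ[ℂ] W)) ∧
    (finrank ℂ (LinearMap.ker (T : V →ₗ[ℂ] W)) : ℤ) - finrank ℂ (W ⧸ LinearMap.range (T : V →ₗ[ℂ] W)) = k

/-- A bounded operator between (semi)normed spaces is *Fredholm* if it has closed range and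
finite-dimensional kernel and cokernel. -/
def IsFredholm {V W : Type*} [SeminormedAddCommGroup V] [NormedSpace ℂ V]
    [SeminormedAddCommGroup W] [NormedSpace ℂ W] (T : V →L[ℂ] W) : Prop :=
  IsClosed (LinearMap.range (T : V →ₗ[ℂ] W) : Set W) ∧ FiniteDimensional ℂ (LinearMap.ker (T : V →ₗ[ℂ] W)) ∧
    FiniteDimensional ℂ (W ⧸ LinearMap.range (T : V →ₗ[ℂ] W))

/-- `T ∈ B(G,H)` is *inessential* if `I_G - S T` is Fredholm for every `S ∈ B(H,G)`. -/
def Inessential {G H : Type*} [SeminormedAddCommGroup G] [NormedSpace ℂ G]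
    [SeminormedAddCommGroup H] [NormedSpace ℂ H] (T : G →L[ℂ] H) : Prop :=
  ∀ S : H →L[ℂ] G, IsFredholm (ContinuousLinearMap.id ℂ G - S.comp T)

/-!
Restrict `φ : S₁ × T₁ ≃ S₂ × T₂` to `T₁` as `t ↦ (A₁ t, A₂ t)` and let `B₁`, `S` be the
`T₁`-components of `φ⁻¹` on `S₂` and on `T₂`. Then `B₁ A₁ = I - S A₂` is Fredholm because `A₂` is
inessential, so on a closed complement `V` of its finite-dimensional kernel `K` it is an
isomorphism onto its complemented range; hence `A₁` embeds `V` complementably into `S₂`, and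
`T₁ ≅ K × V` embeds complementably into `K × S₂`. An index-one Fredholm operator on `S₂` gives
`S₂ ≅ S₂ × ℂ`, so `S₂` absorbs the finite-dimensional summand `K`.
-/

open Function Submodule

theorem ContinuousLinearMap.exists_isTopCompl_ker_equiv_range {𝕜 E F : Type*} [RCLike 𝕜]
    [NormedAddCommGroup E] [NormedSpace 𝕜 E] [CompleteSpace E]
    [NormedAddCommGroup F] [NormedSpace 𝕜 F] [CompleteSpace F] (f : E →L[𝕜] F)
    (hf : IsClosed (f.range : Set F)) [FiniteDimensional 𝕜 f.ker] :
    ∃ (V : Submodule 𝕜 E) (e : V ≃L[𝕜] f.range),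
      IsTopCompl f.ker V ∧ ∀ v : V, (e v : F) = f v := by
  obtain ⟨V, hV⟩ := (ClosedComplemented.of_finiteDimensional f.ker).exists_isTopCompl
  have : CompleteSpace V := hV.isClosed'.completeSpace_coe
  let g : V →L[𝕜] F := f ∘L V.subtypeL
  have hrange : g.range = f.range := by
    change LinearMap.range ((f : E →ₗ[𝕜] F) ∘ₗ V.subtype) = _
    rw [LinearMap.range_comp, range_subtype, map_eq_range_iff]
    exact hV.isCompl.symm.codisjoint
  have hinj : Injective g := by
    change Injective ((f : E →ₗ[𝕜] F) ∘ₗ V.subtype)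
    rw [← LinearMap.ker_eq_bot, LinearMap.ker_comp, ← disjoint_iff_comap_eq_bot]
    exact hV.isCompl.symm.disjoint
  have hclosed : IsClosed (g.range : Set F) := hrange ▸ hf
  exact ⟨V, (g.equivRange hinj hclosed).trans (.ofEq _ _ hrange), hV, fun v => rfl⟩

theorem ContinuousLinearEquiv.nonempty_equiv_prod_of_finiteDimensional {𝕜 Z : Type*}
    [NontriviallyNormedField 𝕜] [CompleteSpace 𝕜] [TopologicalSpace Z] [AddCommMonoid Z]
    [Module 𝕜 Z] (η : Z ≃L[𝕜] Z × 𝕜)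
    (K : Type*) [NormedAddCommGroup K] [NormedSpace 𝕜 K] [FiniteDimensional 𝕜 K] :
    Nonempty (Z ≃L[𝕜] Z × K) := by
  have absorb_pi : ∀ n : ℕ, Nonempty (Z ≃L[𝕜] Z × (Fin n → 𝕜)) := by
    intro n
    induction n with
    | zero => exact ⟨(ContinuousLinearEquiv.prodUnique 𝕜 Z (Fin 0 → 𝕜)).symm⟩
    | succ n ih =>
      obtain ⟨ε⟩ := ih
      have split : ((Fin n → 𝕜) × 𝕜) ≃L[𝕜] (Fin (n + 1) → 𝕜) := .ofFinrankEq (by simp)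
      exact ⟨η.trans <| (ε.prodCongr (.refl 𝕜 𝕜)).trans <|
        (ContinuousLinearEquiv.prodAssoc 𝕜 Z _ 𝕜).trans <|
        (ContinuousLinearEquiv.refl 𝕜 Z).prodCongr split⟩
  obtain ⟨ε⟩ := absorb_pi (finrank 𝕜 K)
  exact ⟨ε.trans ((ContinuousLinearEquiv.refl 𝕜 Z).prodCongr (.ofFinrankEq (by simp)))⟩

theorem IsFredholmOfIndex.nonempty_equiv_prod {E W K : Type*}
    [NormedAddCommGroup E] [NormedSpace ℂ E] [CompleteSpace E]
    [NormedAddCommGroup W] [NormedSpace ℂ W] [CompleteSpace W]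
    [NormedAddCommGroup K] [NormedSpace ℂ K] [FiniteDimensional ℂ K]
    {F : E →L[ℂ] W} (hF : IsFredholmOfIndex F (finrank ℂ K)) : Nonempty (E ≃L[ℂ] W × K) := by
  obtain ⟨hclosed, hker, hcoker, hindex⟩ := hF
  obtain ⟨V, e, hV, -⟩ := F.exists_isTopCompl_ker_equiv_range hclosed
  obtain ⟨C, hC⟩ :=
    (ClosedComplemented.of_finiteDimensional_quotient hclosed).exists_isTopCompl
  let eC := quotientEquivOfIsCompl _ _ hC.isCompl
  have : FiniteDimensional ℂ C := eC.finiteDimensional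
  have hrank : finrank ℂ F.ker = finrank ℂ (C × K) := by
    rw [Module.finrank_prod, ← eC.finrank_eq]
    omega
  let eker : F.ker ≃L[ℂ] C × K := .ofFinrankEq hrank
  -- `E ≃ ker F × V ≃ (C × K) × range F ≃ (range F × C) × K ≃ W × K`
  exact ⟨(prodEquivOfIsTopCompl _ _ hV).symm.trans <| (eker.prodCongr e).trans <|
    (ContinuousLinearEquiv.prodComm ℂ _ _).trans <|
    (ContinuousLinearEquiv.prodAssoc ℂ _ _ _).symm.trans <|
    (prodEquivOfIsTopCompl _ _ hC).prodCongr (.refl ℂ K)⟩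

theorem isFredholm_comp_inl_fst_of_inessential {X Y Z : Type*}
    [SeminormedAddCommGroup X] [NormedSpace ℂ X]
    [SeminormedAddCommGroup Y] [NormedSpace ℂ Y] [SeminormedAddCommGroup Z] [NormedSpace ℂ Z]
    {A : X →L[ℂ] Y × Z} {B : Y × Z →L[ℂ] X}
    (hBA : LeftInverse B A) (hA : Inessential (.snd ℂ Y Z ∘L A)) :
    IsFredholm ((B ∘L .inl ℂ Y Z) ∘L (.fst ℂ Y Z ∘L A)) := by
  have hsplit : (B ∘L .inl ℂ Y Z) ∘L (.fst ℂ Y Z ∘L A) =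
      .id ℂ X - (B ∘L .inr ℂ Y Z) ∘L (.snd ℂ Y Z ∘L A) := by
    ext x
    have := B.comp_inl_add_comp_inr (A x)
    rw [hBA x] at this
    rw [sub_apply, eq_sub_iff_add_eq]
    exact this
  exact hsplit ▸ hA _

theorem IsFredholm.exists_hasLeftInverse_prod {X Y : Type*}
    [NormedAddCommGroup X] [NormedSpace ℂ X] [CompleteSpace X]
    [SeminormedAddCommGroup Y] [NormedSpace ℂ Y] {A : X →L[ℂ] Y} {B : Y →L[ℂ] X}
    (hBA : IsFredholm (B ∘L A)) :
    ∃ (K : Submodule ℂ X) (_ : FiniteDimensional ℂ K) (j : X →L[ℂ] K × Y),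
      j.HasLeftInverse := by
  obtain ⟨hclosed, hker, hcoker⟩ := hBA
  obtain ⟨V, e, hV, he⟩ := (B ∘L A).exists_isTopCompl_ker_equiv_range hclosed
  obtain ⟨p, hp⟩ := ClosedComplemented.of_finiteDimensional_quotient hclosed
  have hBAV : (B ∘L A ∘L V.subtypeL).HasLeftInverse := by
    have hsubtype : (B ∘L A).range.subtypeL.HasLeftInverse := ⟨p, fun y => hp y⟩
    exact (hsubtype.comp e.hasLeftInverse).congr (by ext v; exact (he v).symm)
  exact ⟨_, hker, ((ContinuousLinearMap.id ℂ _).prodMap (A ∘L V.subtypeL)) ∘L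
    (prodEquivOfIsTopCompl _ _ hV).symm.toContinuousLinearMap,
    ((ContinuousLinearEquiv.refl ℂ _).hasLeftInverse.prodMap hBAV.of_comp).comp
      (prodEquivOfIsTopCompl _ _ hV).symm.hasLeftInverse⟩

theorem ContinuousLinearMap.HasLeftInverse.exists_closedComplemented_equiv {R E F : Type*}
    [Ring R] [TopologicalSpace E] [AddCommGroup E] [Module R E]
    [TopologicalSpace F] [AddCommGroup F] [Module R F] {j : E →L[R] F} (hj : j.HasLeftInverse) :
    ∃ N : Submodule R F, N.ClosedComplemented ∧ Nonempty (E ≃L[R] N) := by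
  refine ⟨j.range, hj.closedComplemented_range, ⟨.equivOfInverse j.rangeRestrict
    (hj.leftInverse ∘L j.range.subtypeL) hj.leftInverse_leftInverse ?_⟩⟩
  rintro ⟨_, x, rfl⟩
  ext
  simp [hj.leftInverse_leftInverse x]

theorem complemented_copy_of_essentially_incomparable_sufdq_general (S₁ : Type u)
    [NormedAddCommGroup S₁] [NormedSpace ℂ S₁]
    (S₂ : Type u) [NormedAddCommGroup S₂] [NormedSpace ℂ S₂] [CompleteSpace S₂]
    (T₁ : Type u) [NormedAddCommGroup T₁] [NormedSpace ℂ T₁] [CompleteSpace T₁]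
    (T₂ : Type u) [NormedAddCommGroup T₂] [NormedSpace ℂ T₂]
    (hiso : Nonempty ((S₁ × T₁) ≃L[ℂ] (S₂ × T₂)))
    (hinc : ∀ T : T₁ →L[ℂ] T₂, Inessential T)
    (hSUFDQ : ∃ F : S₂ →L[ℂ] S₂, IsFredholmOfIndex F 1) :
    ∃ N : Submodule ℂ S₂, N.ClosedComplemented ∧ Nonempty (T₁ ≃L[ℂ] N) := by
  obtain ⟨φ⟩ := hiso
  obtain ⟨F, hF⟩ := hSUFDQ
  have hφ : LeftInverse (.snd ℂ S₁ T₁ ∘L φ.symm.toContinuousLinearMap)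
      (φ.toContinuousLinearMap ∘L .inr ℂ S₁ T₁) := fun t => by simp
  obtain ⟨K, _, j, hj⟩ :=
    (isFredholm_comp_inl_fst_of_inessential hφ (hinc _)).exists_hasLeftInverse_prod
  obtain ⟨η⟩ :=
    IsFredholmOfIndex.nonempty_equiv_prod (K := ℂ) (by rwa [finrank_self, Nat.cast_one])
  obtain ⟨Ω⟩ := η.nonempty_equiv_prod_of_finiteDimensional K
  let ψ : (K × S₂) ≃L[ℂ] S₂ := (ContinuousLinearEquiv.prodComm ℂ K S₂).trans Ω.symm
  exact (ψ.hasLeftInverse.comp hj).exists_closedComplemented_equiv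

/-- If `S₁ ⊕ T₁ ≅ S₂ ⊕ T₂`, `T₁, T₂` are essentially incomparable and `S₂` is
SUFDQ (i.e. `B(S₂)` contains a Fredholm operator of index `1`), then `S₂` contains a
complemented subspace isomorphic to `T₁`. -/
theorem complemented_copy_of_essentially_incomparable_sufdq (S₁ : Type u)
    [NormedAddCommGroup S₁] [NormedSpace ℂ S₁] [CompleteSpace S₁]
    (S₂ : Type u) [NormedAddCommGroup S₂] [NormedSpace ℂ S₂] [CompleteSpace S₂]
    (T₁ : Type u) [NormedAddCommGroup T₁] [NormedSpace ℂ T₁] [CompleteSpace T₁]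
    (T₂ : Type u) [NormedAddCommGroup T₂] [NormedSpace ℂ T₂] [CompleteSpace T₂]
    (hiso : Nonempty ((S₁ × T₁) ≃L[ℂ] (S₂ × T₂)))
    (hinc : ∀ T : T₁ →L[ℂ] T₂, Inessential T)
    (hSUFDQ : ∃ F : S₂ →L[ℂ] S₂, IsFredholmOfIndex F 1) :
    ∃ N : Submodule ℂ S₂, N.ClosedComplemented ∧ Nonempty (T₁ ≃L[ℂ] N) :=
  complemented_copy_of_essentially_incomparable_sufdq_general S₁ S₂ T₁ T₂ hiso hinc hSUFDQ
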